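/- Let A be an associative unital K-algebra equipped with a Manin system x of size 2, and let Δ : A → A ⊗_K A be a homomorphism of K-algebras satisfying Δ(x_{i,k}) = x_{i,1} ⊗ x_{1,k} + x_{i,2} ⊗ x_{2,k} for all i, k ∈ {1,2}. Then for every natural number a and all i, j ∈ {1,2}: Δ(x_{i,j}^a) = ∑_{s=0}^{a} [a choose s]_q · (x_{i,1}^s x_{i,2}^{a−s}) ⊗ (x_{2,j}^{a−s} x_{1,j}^s). (Lemma 'Assad': comultiplication of powers of generators in 𝒪_q(2).) -/

import Mathlib

open scoped BigOperators

/-- The variable `q` in the field `K = ℚ(q)` of rational functions. -/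
noncomputable def q : RatFunc ℚ := RatFunc.X

/-- The balanced quantum integer `[n]_q = (q^n − q^{−n})/(q − q⁻¹)`. -/
noncomputable def qint (n : ℤ) : RatFunc ℚ := (q ^ n - q ^ (-n)) / (q - q⁻¹)

/-- The quantum factorial `[s]_q! = ∏_{i=1}^s [i]_q`. -/
noncomputable def qfact (s : ℕ) : RatFunc ℚ := ∏ i ∈ Finset.range s, qint ((i : ℤ) + 1)

/-- The balanced quantum binomial coefficient
`[m choose s]_q = ([m]_q [m−1]_q ⋯ [m−s+1]_q)/[s]_q!`. -/
noncomputable def qbinom (m : ℤ) (s : ℕ) : RatFunc ℚ :=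
  (∏ i ∈ Finset.range s, qint (m - (i : ℤ))) / qfact s

open TensorProduct

/-- A *Manin system* of size `n` in an associative unital `ℚ(q)`-algebra `A`: a family
`x i j` satisfying the defining relations of Manin's quantized coordinate algebra
`𝒪_q(n)` of `n × n` matrices. -/
structure IsManinSystem {A : Type*} [Ring A] [Algebra (RatFunc ℚ) A] {n : ℕ}
    (x : Fin n → Fin n → A) : Prop where
  comm : ∀ i j k l : Fin n, i < k → l < j → x i j * x k l = x k l * x i j
  main : ∀ i j k l : Fin n, k < i → l < j →
    x i j * x k l = x k l * x i j - (q - q⁻¹) • (x i l * x k j)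
  row : ∀ i j l : Fin n, l < j → x i j * x i l = q⁻¹ • (x i l * x i j)
  col : ∀ i j k : Fin n, i < k → x i j * x k j = q • (x k j * x i j)

lemma hq0 : q ≠ 0 := RatFunc.X_ne_zero

lemma q_pow_ne_one (n : ℕ) (hn : n ≠ 0) : q ^ n ≠ 1 := by
  intro h
  have : (Polynomial.X : Polynomial ℚ) ^ n = 1 := by
    apply RatFunc.algebraMap_injective ℚ
    simpa [q, map_pow] using h
  have := congrArg Polynomial.natDegree this
  simp [Polynomial.natDegree_X_pow] at this
  exact hn this

lemma hqsub : q - q⁻¹ ≠ 0 := by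
  intro h
  have hq : q = q⁻¹ := by linear_combination h
  have : q ^ 2 = 1 := by
    rw [pow_two]; nth_rewrite 2 [hq]; exact mul_inv_cancel₀ hq0
  exact q_pow_ne_one 2 (by norm_num) this

lemma qint_succ_ne (n : ℕ) : qint ((n : ℤ) + 1) ≠ 0 := by
  have h1 : q ^ ((n : ℤ) + 1) = q ^ (n + 1 : ℕ) := by
    rw [← zpow_natCast]; push_cast; ring_nf
  have h2 : q ^ (-((n : ℤ) + 1)) = (q ^ (n + 1 : ℕ))⁻¹ := by
    rw [zpow_neg, ← zpow_natCast]; push_cast; ring_nf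
  unfold qint
  rw [h1, h2]
  apply div_ne_zero _ hqsub
  intro h
  have hpne : q ^ (n + 1 : ℕ) ≠ 0 := pow_ne_zero _ hq0
  have hpp : q ^ (n + 1 : ℕ) * q ^ (n + 1 : ℕ) = 1 := by
    have h' := sub_eq_zero.mp h
    nth_rewrite 2 [h']
    exact mul_inv_cancel₀ hpne
  have : q ^ (2 * (n + 1)) = 1 := by
    rw [two_mul, pow_add]; exact hpp
  exact q_pow_ne_one _ (by omega) this

lemma qfact_ne (s : ℕ) : qfact s ≠ 0 := by
  unfold qfact
  exact Finset.prod_ne_zero_iff.mpr fun i _ => qint_succ_ne i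

lemma qbinom_zero (m : ℤ) : qbinom m 0 = 1 := by
  simp [qbinom, qfact]

lemma qint_zero : qint 0 = 0 := by simp [qint]

lemma qbinom_succ_self (a : ℕ) : qbinom (a : ℤ) (a + 1) = 0 := by
  unfold qbinom
  rw [Finset.prod_range_succ]
  simp [qint_zero]

lemma key (n k : ℤ) : qint n = q ^ k * qint (n - k) + q ^ (k - n) * qint k := by
  unfold qint
  rw [← mul_div_assoc, ← mul_div_assoc, ← add_div]
  congr 1
  rw [mul_sub, mul_sub, ← zpow_add₀ hq0, ← zpow_add₀ hq0, ← zpow_add₀ hq0, ← zpow_add₀ hq0]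
  ring_nf

lemma pascal (a s : ℕ) (h : s ≤ a) :
    qbinom ((a : ℤ) + 1) (s + 1)
      = q ^ (s + 1) * qbinom (a : ℤ) (s + 1) + (q⁻¹) ^ (a - s) * qbinom (a : ℤ) s := by
  have hinv : ((q⁻¹) ^ (a - s) : RatFunc ℚ) = q ^ ((s : ℤ) - a) := by
    rw [inv_pow, ← zpow_natCast, ← zpow_neg]
    congr 1
    omega
  have hpow : (q ^ (s + 1) : RatFunc ℚ) = q ^ ((s : ℤ) + 1) := by
    rw [← zpow_natCast]; push_cast; ring_nf
  have hshift : ∀ i : ℕ, (a : ℤ) + 1 - ((i : ℤ) + 1) = (a : ℤ) - i := by intro i; ring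
  have hP1 : (∏ i ∈ Finset.range (s + 1), qint ((a : ℤ) + 1 - i))
      = (∏ i ∈ Finset.range s, qint ((a : ℤ) - i)) * qint ((a : ℤ) + 1) := by
    rw [Finset.prod_range_succ']
    simp only [Nat.cast_add, Nat.cast_one, hshift]
    norm_num
  have hP2 : (∏ i ∈ Finset.range (s + 1), qint ((a : ℤ) - i))
      = (∏ i ∈ Finset.range s, qint ((a : ℤ) - i)) * qint ((a : ℤ) - s) :=
    Finset.prod_range_succ _ _
  have hF : qfact (s + 1) = qfact s * qint ((s : ℤ) + 1) := Finset.prod_range_succ _ _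
  have hkey : qint ((a : ℤ) + 1)
      = q ^ ((s : ℤ) + 1) * qint ((a : ℤ) - s) + q ^ ((s : ℤ) - a) * qint ((s : ℤ) + 1) := by
    have := key ((a : ℤ) + 1) ((s : ℤ) + 1)
    convert this using 3 <;> ring
  unfold qbinom
  rw [hP1, hP2, hF, hinv, hpow, hkey]
  have h1 : qfact s ≠ 0 := qfact_ne s
  have h2 : qint ((s : ℤ) + 1) ≠ 0 := qint_succ_ne s
  field_simp

lemma swap_pow {A : Type*} [Ring A] [Algebra (RatFunc ℚ) A] {b c : A} {r : RatFunc ℚ}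
    (h : b * c = r • (c * b)) (m : ℕ) : b ^ m * c = r ^ m • (c * b ^ m) := by
  induction m with
  | zero => simp
  | succ n ih =>
    rw [pow_succ, mul_assoc, h, mul_smul_comm, ← mul_assoc, ih, smul_mul_assoc, smul_smul,
      mul_assoc, ← pow_succ, ← pow_succ']

lemma sum_step {M : Type*} [AddCommMonoid M] [Module (RatFunc ℚ) M]
    (a : ℕ) (U : ℕ → M) (c d e : ℕ → RatFunc ℚ)
    (hc : ∀ s, s ≤ a → c (s + 1) = d s + e (s + 1))
    (hc0 : c 0 = e 0)
    (hea : e (a + 1) = 0) :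
    (∑ s ∈ Finset.range (a + 1), d s • U (s + 1))
      + ∑ s ∈ Finset.range (a + 1), e s • U s
    = ∑ s ∈ Finset.range (a + 1 + 1), c s • U s := by
  rw [Finset.sum_range_succ' (fun s => c s • U s) (a + 1)]
  have h1 : ∑ s ∈ Finset.range (a + 1), c (s + 1) • U (s + 1)
      = (∑ s ∈ Finset.range (a + 1), d s • U (s + 1))
        + ∑ s ∈ Finset.range (a + 1), e (s + 1) • U (s + 1) := by
    rw [← Finset.sum_add_distrib]
    refine Finset.sum_congr rfl fun s hs => ?_
    rw [hc s (Nat.lt_succ_iff.mp (Finset.mem_range.mp hs)), add_smul]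
  rw [h1, hc0, add_assoc]
  congr 1
  rw [← Finset.sum_range_succ' (fun s => e s • U s) (a + 1),
    Finset.sum_range_succ (fun s => e s • U s) (a + 1), hea, zero_smul, add_zero]

set_option synthInstance.maxHeartbeats 800000 in
/-- Lemma `Assad`: comultiplication of powers of the generators in `𝒪_q(2)`:
`Δ(x_{i,j}^a) = ∑_{s=0}^a [a choose s]_q · (x_{i,1}^s x_{i,2}^{a−s}) ⊗ (x_{2,j}^{a−s} x_{1,j}^s)`.
(Indices `1, 2` of the paper correspond to `0, 1 : Fin 2`.) -/
theorem assad {A : Type*} [Ring A] [Algebra (RatFunc ℚ) A]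
    (x : Fin 2 → Fin 2 → A) (hx : IsManinSystem x)
    (Δ : A →ₐ[RatFunc ℚ] A ⊗[RatFunc ℚ] A)
    (hΔ : ∀ i k : Fin 2,
      Δ (x i k) = x i 0 ⊗ₜ[RatFunc ℚ] x 0 k + x i 1 ⊗ₜ[RatFunc ℚ] x 1 k)
    (a : ℕ) (i j : Fin 2) :
    Δ (x i j ^ a) =
      ∑ s ∈ Finset.range (a + 1),
        qbinom (a : ℤ) s •
          ((x i 0 ^ s * x i 1 ^ (a - s)) ⊗ₜ[RatFunc ℚ] (x 1 j ^ (a - s) * x 0 j ^ s)) := by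
  induction a with
  | zero =>
    simp [qbinom_zero, Algebra.TensorProduct.one_def]
  | succ a IH =>
    have h01 : (0 : Fin 2) < 1 := by decide
    have hrow := hx.row i 1 0 h01
    have hcol := hx.col 0 j 1 h01
    rw [pow_succ, map_mul, IH, hΔ i j, Finset.sum_mul]
    have hterm : ∀ s ∈ Finset.range (a + 1),
        (qbinom (a : ℤ) s •
            ((x i 0 ^ s * x i 1 ^ (a - s)) ⊗ₜ[RatFunc ℚ] (x 1 j ^ (a - s) * x 0 j ^ s)))
          * (x i 0 ⊗ₜ[RatFunc ℚ] x 0 j + x i 1 ⊗ₜ[RatFunc ℚ] x 1 j)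
        = (qbinom (a : ℤ) s * (q⁻¹) ^ (a - s)) •
            ((x i 0 ^ (s + 1) * x i 1 ^ (a + 1 - (s + 1))) ⊗ₜ[RatFunc ℚ]
              (x 1 j ^ (a + 1 - (s + 1)) * x 0 j ^ (s + 1)))
          + (qbinom (a : ℤ) s * q ^ s) •
            ((x i 0 ^ s * x i 1 ^ (a + 1 - s)) ⊗ₜ[RatFunc ℚ]
              (x 1 j ^ (a + 1 - s) * x 0 j ^ s)) := by
      intro s hs
      have hsle : s ≤ a := Nat.lt_succ_iff.mp (Finset.mem_range.mp hs)
      have e1 : a + 1 - (s + 1) = a - s := by omega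
      have e2 : a + 1 - s = (a - s) + 1 := by omega
      rw [e1, e2, mul_add, smul_mul_assoc, smul_mul_assoc]
      have hX : ((x i 0 ^ s * x i 1 ^ (a - s)) ⊗ₜ[RatFunc ℚ] (x 1 j ^ (a - s) * x 0 j ^ s))
            * (x i 0 ⊗ₜ[RatFunc ℚ] x 0 j)
          = (q⁻¹) ^ (a - s) •
            ((x i 0 ^ (s + 1) * x i 1 ^ (a - s)) ⊗ₜ[RatFunc ℚ]
              (x 1 j ^ (a - s) * x 0 j ^ (s + 1))) := by
        rw [Algebra.TensorProduct.tmul_mul_tmul,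
          mul_assoc (x i 0 ^ s), swap_pow hrow (a - s), mul_smul_comm,
          ← mul_assoc (x i 0 ^ s), ← pow_succ,
          mul_assoc (x 1 j ^ (a - s)), ← pow_succ,
          TensorProduct.smul_tmul']
      have hY : ((x i 0 ^ s * x i 1 ^ (a - s)) ⊗ₜ[RatFunc ℚ] (x 1 j ^ (a - s) * x 0 j ^ s))
            * (x i 1 ⊗ₜ[RatFunc ℚ] x 1 j)
          = q ^ s •
            ((x i 0 ^ s * x i 1 ^ ((a - s) + 1)) ⊗ₜ[RatFunc ℚ]
              (x 1 j ^ ((a - s) + 1) * x 0 j ^ s)) := by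
        rw [Algebra.TensorProduct.tmul_mul_tmul,
          mul_assoc (x i 0 ^ s), ← pow_succ,
          mul_assoc (x 1 j ^ (a - s)), swap_pow hcol s, mul_smul_comm,
          ← mul_assoc (x 1 j ^ (a - s)), ← pow_succ,
          ← TensorProduct.smul_tmul, TensorProduct.smul_tmul']
      rw [hX, hY, smul_smul, smul_smul]
    rw [Finset.sum_congr rfl hterm, Finset.sum_add_distrib]
    have := sum_step a
      (fun t => (x i 0 ^ t * x i 1 ^ (a + 1 - t)) ⊗ₜ[RatFunc ℚ]
        (x 1 j ^ (a + 1 - t) * x 0 j ^ t))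
      (fun s => qbinom ((a + 1 : ℕ) : ℤ) s)
      (fun s => qbinom (a : ℤ) s * (q⁻¹) ^ (a - s))
      (fun s => qbinom (a : ℤ) s * q ^ s)
      (fun s hs => by
        simp only [Nat.cast_add, Nat.cast_one]
        rw [pascal a s hs]; ring)
      (by simp [qbinom_zero])
      (by simp [qbinom_succ_self])
    exact this
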